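/- arXiv:math/0606109 — 4 statements merged into one kernel-verified Lean document; each statement's English description precedes it below -/
import Mathlib

section
/- Let O be a Dedekind domain with fraction field k, and let a, c be nonzero fractional ideals. Suppose q, s, m, n ∈ k satisfy q·a^{-1} + s·O = m·a^{-1} + n·O = c (equalities of fractional ideals). Then there exists a 2×2 matrix γ = (γ_{ij}) with γ_{11} ∈ O, γ_{12} ∈ a, γ_{21} ∈ a^{-1}, γ_{22} ∈ O and det γ ∈ O^×, such that γ·(m, n)^T = (q, s)^T. -/
/-!
A pair `(u, v)` with `u·a⁻¹ + v·O = c` is the first column of a determinant-one matrix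
`A_{u,v} = (u, -y; v, x)`: multiplying the hypothesis by `c⁻¹` gives a Bézout relation
`u x + v y = 1` with `x ∈ a⁻¹c⁻¹`, `y ∈ c⁻¹`, and the entries of `A_{u,v}` lie in
`(ca, c⁻¹; c, a⁻¹c⁻¹) = (r i * t j)` for `r = (1, a⁻¹)`, `t = (ca, c⁻¹)`.
Then `γ = A_{q,s} · adj A_{m,n}` sends `(m, n)` to `(q, s)`, and since `adj A_{m,n}` has entries
in `(t i)⁻¹ * (r j)⁻¹`, the ideal `c` cancels in the product and `γ` has entries in
`r i * (r j)⁻¹ = (O, a; a⁻¹, O)`.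
-/

open FractionalIdeal

namespace FractionalIdeal

section Ring

variable {R P : Type*} [CommRing R] [CommRing P] [Algebra R P] {S : Submonoid R}

/-- When the `t j` are invertible, such a matrix maps `⊕ⱼ (t j)⁻¹` into `⊕ᵢ r i`. -/
def IsGraded {ι κ : Type*} (r : ι → FractionalIdeal S P) (t : κ → FractionalIdeal S P)
    (M : Matrix ι κ P) : Prop :=
  ∀ i j, M i j ∈ r i * t j

theorem IsGraded.mul {ι κ μ : Type*} [Fintype κ] {r : ι → FractionalIdeal S P}
    {t t' : κ → FractionalIdeal S P} {u : μ → FractionalIdeal S P}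
    {M : Matrix ι κ P} {N : Matrix κ μ P} (hM : IsGraded r t M) (hN : IsGraded t' u N)
    (htt' : ∀ j, t j * t' j ≤ 1) : IsGraded r u (M * N) := by
  intro i l
  rw [Matrix.mul_apply, ← mem_coe]
  refine Submodule.sum_mem _ fun j _ => ?_
  have hmem : M i j * N j l ∈ r i * (t j * t' j) * u l := by
    simpa only [mul_assoc] using mul_mem_mul (hM i j) (hN j l)
  have hle : r i * (t j * t' j) * u l ≤ r i * u l := by
    simpa only [mul_one] using mul_le_mul_left (mul_le_mul_right (htt' j) (r i)) (u l)
  exact mem_coe.mpr (hle hmem)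

theorem exists_mul_add_mul_eq_one [IsLocalization S P] {I J : FractionalIdeal S P} {u v : P}
    (h : spanSingleton S u * I + spanSingleton S v * J = 1) :
    ∃ x ∈ I, ∃ y ∈ J, u * x + v * y = 1 := by
  have h1 : (1 : P) ∈ spanSingleton S u * I + spanSingleton S v * J := h ▸ one_mem_one S
  rw [← mem_coe, coe_add, Submodule.add_eq_sup, Submodule.mem_sup] at h1
  obtain ⟨_, hux, _, hvy, hsum⟩ := h1
  obtain ⟨x, hx, rfl⟩ := mem_singleton_mul.mp hux
  obtain ⟨y, hy, rfl⟩ := mem_singleton_mul.mp hvy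
  exact ⟨x, hx, y, hy, hsum⟩

end Ring

section Dedekind

variable {O k : Type*} [CommRing O] [IsDedekindDomain O] [Field k] [Algebra O k]
  [IsFractionRing O k]

theorem IsGraded.adjugate {r t : Fin 2 → FractionalIdeal (nonZeroDivisors O) k}
    {M : Matrix (Fin 2) (Fin 2) k} (hM : IsGraded r t M) (hrt : r 0 * r 1 * t 0 * t 1 = 1) :
    IsGraded t⁻¹ r⁻¹ M.adjugate := by
  have inv_mul_inv {x y : FractionalIdeal (nonZeroDivisors O) k} (i j : Fin 2)
      (h : x * y * (r i * t j) = 1) : x⁻¹ * y⁻¹ = r i * t j := by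
    rw [← mul_inv, inv_eq_of_mul_eq_one_right h]
  intro i j
  rw [Matrix.adjugate_fin_two, Pi.inv_apply, Pi.inv_apply]
  fin_cases i <;> fin_cases j <;>
    simp only [Fin.zero_eta, Fin.mk_one, Matrix.of_apply, Matrix.cons_val', Matrix.cons_val_zero,
      Matrix.cons_val_one, Matrix.cons_val_fin_one]
  · rw [inv_mul_inv 1 1 (by rw [← hrt]; ring)]
    exact hM 1 1
  · rw [inv_mul_inv 0 1 (by rw [← hrt]; ring)]
    exact Submodule.neg_mem _ (hM 0 1)
  · rw [inv_mul_inv 1 0 (by rw [← hrt]; ring)]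
    exact Submodule.neg_mem _ (hM 1 0)
  · rw [inv_mul_inv 0 0 (by rw [← hrt]; ring)]
    exact hM 0 0

theorem mem_mul_inv_of_spanSingleton_mul_le {I c : FractionalIdeal (nonZeroDivisors O) k}
    (hI : I ≠ 0) {u : k} (h : spanSingleton _ u * I ≤ c) : u ∈ c * I⁻¹ := by
  rw [← spanSingleton_le_iff_mem]
  calc spanSingleton _ u = spanSingleton _ u * I * I⁻¹ := by
        rw [mul_assoc, mul_inv_cancel₀ hI, mul_one]
    _ ≤ c * I⁻¹ := mul_le_mul_left h _

theorem exists_isGraded_det_eq_one_mulVec_single {a c : FractionalIdeal (nonZeroDivisors O) k}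
    (ha : a ≠ 0) (hc : c ≠ 0) {u v : k}
    (h : spanSingleton _ u * a⁻¹ + spanSingleton _ v * 1 = c) :
    ∃ A : Matrix (Fin 2) (Fin 2) k, IsGraded ![1, a⁻¹] ![c * a, c⁻¹] A ∧ A.det = 1 ∧
      A.mulVec (Pi.single 0 1) = ![u, v] := by
  obtain ⟨hule, hvle⟩ := sup_le_iff.mp ((sup_eq_add _ _).trans h).le
  have hu : u ∈ c * a := by
    simpa using mem_mul_inv_of_spanSingleton_mul_le (inv_ne_zero ha) hule
  have hv : v ∈ c := by
    rw [← spanSingleton_le_iff_mem, ← mul_one (spanSingleton _ v)]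
    exact hvle
  obtain ⟨x, hx, y, hy, hxy⟩ :
      ∃ x ∈ a⁻¹ * c⁻¹, ∃ y ∈ c⁻¹, u * x + v * y = 1 := by
    refine exists_mul_add_mul_eq_one ?_
    calc spanSingleton _ u * (a⁻¹ * c⁻¹) + spanSingleton _ v * c⁻¹
        = (spanSingleton _ u * a⁻¹ + spanSingleton _ v * 1) * c⁻¹ := by ring
      _ = 1 := by rw [h, mul_inv_cancel₀ hc]
  refine ⟨!![u, -y; v, x], ?_, ?_, ?_⟩
  · intro i j
    fin_cases i <;> fin_cases j <;>
      simp only [Fin.zero_eta, Fin.mk_one, Matrix.of_apply, Matrix.cons_val', Matrix.cons_val_zero,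
        Matrix.cons_val_one, Matrix.cons_val_fin_one, one_mul]
    · exact hu
    · exact Submodule.neg_mem _ hy
    · rwa [mul_left_comm, inv_mul_cancel₀ ha, mul_one]
    · exact hx
  · rw [Matrix.det_fin_two_of]
    linear_combination hxy
  · ext i
    fin_cases i <;> simp

end Dedekind

end FractionalIdeal

/-- Let `O` be a Dedekind domain with fraction field `k` and `a`, `c` nonzero fractional
ideals. If `q, s, m, n ∈ k` satisfy `q·a⁻¹ + s·O = m·a⁻¹ + n·O = c`, then there is a
2×2 matrix `γ` with entries `γ₁₁ ∈ O`, `γ₁₂ ∈ a`, `γ₂₁ ∈ a⁻¹`, `γ₂₂ ∈ O` and unit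
determinant such that `γ·(m,n)ᵀ = (q,s)ᵀ`. -/
theorem exists_matrix_of_fractionalIdeal_generators
    (O k : Type*) [CommRing O] [IsDedekindDomain O] [Field k] [Algebra O k]
    [IsFractionRing O k]
    (a c : FractionalIdeal (nonZeroDivisors O) k) (ha : a ≠ 0) (hc : c ≠ 0)
    (q s m n : k)
    (hqs : spanSingleton (nonZeroDivisors O) q * a⁻¹ +
        spanSingleton (nonZeroDivisors O) s * 1 = c)
    (hmn : spanSingleton (nonZeroDivisors O) m * a⁻¹ +
        spanSingleton (nonZeroDivisors O) n * 1 = c) :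
    ∃ γ : Matrix (Fin 2) (Fin 2) k,
      γ 0 0 ∈ (1 : FractionalIdeal (nonZeroDivisors O) k) ∧
      γ 0 1 ∈ a ∧
      γ 1 0 ∈ a⁻¹ ∧
      γ 1 1 ∈ (1 : FractionalIdeal (nonZeroDivisors O) k) ∧
      (∃ u : Oˣ, algebraMap O k u = γ.det) ∧
      γ.mulVec ![m, n] = ![q, s] := by
  obtain ⟨A, hA, hAdet, hAcol⟩ := exists_isGraded_det_eq_one_mulVec_single ha hc hmn
  obtain ⟨B, hB, hBdet, hBcol⟩ := exists_isGraded_det_eq_one_mulVec_single ha hc hqs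
  have hprod : 1 * a⁻¹ * (c * a) * c⁻¹ = 1 := by field_simp
  have hγ : IsGraded ![1, a⁻¹] ![1, a⁻¹]⁻¹ (B * A.adjugate) :=
    hB.mul (hA.adjugate hprod) fun j => (mul_inv_cancel₀ (by fin_cases j <;> simp [ha, hc])).le
  refine ⟨B * A.adjugate, by simpa using hγ 0 0, by simpa using hγ 0 1, by simpa using hγ 1 0,
    by simpa [ha] using hγ 1 1, ⟨1, by simp [Matrix.det_adjugate, hAdet, hBdet]⟩, ?_⟩
  rw [← hAcol, Matrix.mulVec_mulVec, Matrix.mul_assoc, Matrix.adjugate_mul, hAdet, one_smul,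
    Matrix.mul_one, hBcol]
end

section
/- Let O be a Dedekind domain with fraction field k. Suppose R = O ⊕ O·ω₁ ⊕ a·ω₂ is a commutative O-algebra structure on the module O ⊕ O ⊕ a with identity (1,0,0), satisfying ω₁ω₂ = −ad, ω₁² = −ac − bω₁ + aω₂, ω₂² = −bd − dω₁ + cω₂ for some a, b, c, d ∈ k. If R is an O-algebra (closed under multiplication), then necessarily a ∈ 𝔞, b ∈ O, c ∈ 𝔞^{-1}, d ∈ 𝔞^{-2}, where 𝔞 is the fractional ideal a. -/
/-!
Reading off `k`-coordinates in the basis `1, ω₁, ω₂`, the condition `ω₁² ∈ R` gives `b ∈ O` and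
`a ∈ 𝔞`, while `x ω₂² ∈ R` for all `x ∈ 𝔞²` gives `𝔞² d ⊆ O` and `𝔞² c ⊆ 𝔞`. Since fractional
ideals of a Dedekind domain are invertible, these say `d ∈ 𝔞⁻²` and `c ∈ 𝔞⁻¹`.
-/

open FractionalIdeal

theorem LinearIndependent.eq_of_triple {R M : Type*} [Semiring R] [AddCommMonoid M] [Module R M]
    {x y z : M} (h : LinearIndependent R ![x, y, z]) {s t u s' t' u' : R}
    (h' : s • x + t • y + u • z = s' • x + t' • y + u' • z) : s = s' ∧ t = t' ∧ u = u' := by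
  have key := Fintype.linearIndependent_iffₛ.mp h ![s, t, u] ![s', t', u']
    (by simpa [Fin.sum_univ_three] using h')
  exact ⟨key 0, key 1, key 2⟩

theorem FractionalIdeal.neg_mem_iff {R P : Type*} [CommRing R] {S : Submonoid R} [CommRing P]
    [Algebra R P] {I : FractionalIdeal S P} {x : P} : -x ∈ I ↔ x ∈ I :=
  Submodule.neg_mem_iff (I : Submodule R P)

section Lattice

variable {O k A : Type*} [CommRing O] [Field k] [Algebra O k]
  [CommRing A] [Algebra k A] [Algebra O A] [IsScalarTower O k A]

def cubicLattice {S : Submonoid O} (𝔞 : FractionalIdeal S k) (ω₁ ω₂ : A) : Set A :=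
  {z | ∃ p q : O, ∃ r : k, r ∈ 𝔞 ∧
    z = algebraMap O A p + algebraMap O A q * ω₁ + algebraMap k A r * ω₂}

theorem mem_cubicLattice_iff {S : Submonoid O} {𝔞 : FractionalIdeal S k} {ω₁ ω₂ : A}
    (hind : LinearIndependent k ![(1 : A), ω₁, ω₂]) {α β γ : k} :
    algebraMap k A α + algebraMap k A β * ω₁ + algebraMap k A γ * ω₂ ∈ cubicLattice 𝔞 ω₁ ω₂ ↔
      α ∈ (1 : FractionalIdeal S k) ∧ β ∈ (1 : FractionalIdeal S k) ∧ γ ∈ 𝔞 := by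
  simp only [mem_one_iff, cubicLattice, Set.mem_ofPred_eq, IsScalarTower.algebraMap_apply O k A]
  constructor
  · rintro ⟨p, q, r, hr, hz⟩
    obtain ⟨rfl, rfl, rfl⟩ :=
      hind.eq_of_triple (by simpa only [Algebra.smul_def, mul_one] using hz)
    exact ⟨⟨p, rfl⟩, ⟨q, rfl⟩, hr⟩
  · rintro ⟨⟨p, rfl⟩, ⟨q, rfl⟩, hγ⟩
    exact ⟨p, q, γ, hγ, rfl⟩

end Lattice

theorem FractionalIdeal.mem_inv_of_forall_mul_mem {O k : Type*} [CommRing O] [IsDedekindDomain O]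
    [Field k] [Algebra O k] [IsFractionRing O k] {I J : FractionalIdeal (nonZeroDivisors O) k}
    (hI : I ≠ 0) (hJ : J ≠ 0) {c : k} (h : ∀ x ∈ I * J, x * c ∈ J) : c ∈ I⁻¹ := by
  have hle : spanSingleton _ c * I * J ≤ 1 * J := by
    rw [mul_assoc, one_mul, FractionalIdeal.mul_le]
    intro i hi x hx
    obtain ⟨z, rfl⟩ := (mem_spanSingleton _).mp hi
    rw [smul_mul_assoc, mul_comm]
    exact Submodule.smul_mem _ z (h x hx)
  have hcI : spanSingleton _ c * I ≤ 1 :=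
    (mul_le_mul_iff_of_pos_right (pos_iff_ne_zero.mpr hJ)).mp hle
  exact (mem_inv_iff hI).mpr fun y hy ↦
    FractionalIdeal.mul_le.mp hcI c (mem_spanSingleton_self _ c) y hy

theorem coefficients_membership_of_cubic_multiplication_general
    (O k : Type*) [CommRing O] [IsDedekindDomain O] [Field k] [Algebra O k]
    [IsFractionRing O k]
    (A : Type*) [CommRing A] [Algebra k A] [Algebra O A] [IsScalarTower O k A]
    (𝔞 : FractionalIdeal (nonZeroDivisors O) k) (h𝔞 : 𝔞 ≠ 0)
    (a b c d : k) (ω₁ ω₂ : A)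
    (hind : LinearIndependent k ![(1 : A), ω₁, ω₂])
    (h11 : ω₁ * ω₁ = algebraMap k A (-(a * c)) - algebraMap k A b * ω₁ +
      algebraMap k A a * ω₂)
    (h22 : ω₂ * ω₂ = algebraMap k A (-(b * d)) - algebraMap k A d * ω₁ +
      algebraMap k A c * ω₂)
    (R : Set A)
    (hR : R = {z | ∃ p q : O, ∃ r : k, r ∈ 𝔞 ∧
      z = algebraMap O A p + algebraMap O A q * ω₁ + algebraMap k A r * ω₂})
    (hc1 : ω₁ * ω₁ ∈ R)
    (hc3 : ∀ x : k, x ∈ 𝔞 * 𝔞 → algebraMap k A x * (ω₂ * ω₂) ∈ R) :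
    a ∈ 𝔞 ∧ b ∈ (1 : FractionalIdeal (nonZeroDivisors O) k) ∧ c ∈ 𝔞⁻¹ ∧ d ∈ 𝔞⁻¹ * 𝔞⁻¹ := by
  subst hR
  have hω₁ : ω₁ * ω₁ = algebraMap k A (-(a * c)) + algebraMap k A (-b) * ω₁ +
      algebraMap k A a * ω₂ := by
    rw [h11, map_neg (algebraMap k A) b]; ring
  rw [hω₁] at hc1
  obtain ⟨-, hb, ha⟩ := (mem_cubicLattice_iff hind).mp hc1
  have hω₂ : ∀ x ∈ 𝔞 * 𝔞, -(x * d) ∈ (1 : FractionalIdeal (nonZeroDivisors O) k) ∧ x * c ∈ 𝔞 := by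
    intro x hx
    have hx' := hc3 x hx
    rw [show algebraMap k A x * (ω₂ * ω₂) = algebraMap k A (-(x * (b * d))) +
        algebraMap k A (-(x * d)) * ω₁ + algebraMap k A (x * c) * ω₂ by
      rw [h22]; simp only [map_neg, map_mul]; ring] at hx'
    exact ((mem_cubicLattice_iff hind).mp hx').2
  refine ⟨ha, FractionalIdeal.neg_mem_iff.mp hb,
    mem_inv_of_forall_mul_mem h𝔞 h𝔞 fun x hx ↦ (hω₂ x hx).2, ?_⟩
  rw [← mul_inv, mem_inv_iff (mul_ne_zero h𝔞 h𝔞)]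
  intro x hx
  rw [mul_comm]
  exact FractionalIdeal.neg_mem_iff.mp (hω₂ x hx).1

/-- Let `O` be a Dedekind domain with fraction field `k`, `𝔞` a nonzero fractional ideal,
and `A` a commutative `k`-algebra containing `k`-linearly independent elements `1, ω₁, ω₂`
satisfying the multiplication relations `ω₁ω₂ = −ad`, `ω₁² = −ac − bω₁ + aω₂`,
`ω₂² = −bd − dω₁ + cω₂`. If the `O`-module `R = O ⊕ O·ω₁ ⊕ 𝔞·ω₂` is closed under
multiplication (i.e. `O·ω₁²`, `𝔞·ω₁ω₂`, `𝔞²·ω₂²` lie in `R`), then necessarily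
`a ∈ 𝔞`, `b ∈ O`, `c ∈ 𝔞⁻¹`, `d ∈ 𝔞⁻²`. -/
theorem coefficients_membership_of_cubic_multiplication
    (O k : Type*) [CommRing O] [IsDedekindDomain O] [Field k] [Algebra O k]
    [IsFractionRing O k]
    (A : Type*) [CommRing A] [Algebra k A] [Algebra O A] [IsScalarTower O k A]
    (𝔞 : FractionalIdeal (nonZeroDivisors O) k) (h𝔞 : 𝔞 ≠ 0)
    (a b c d : k) (ω₁ ω₂ : A)
    (hind : LinearIndependent k ![(1 : A), ω₁, ω₂])
    (h12 : ω₁ * ω₂ = algebraMap k A (-(a * d)))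
    (h11 : ω₁ * ω₁ = algebraMap k A (-(a * c)) - algebraMap k A b * ω₁ +
      algebraMap k A a * ω₂)
    (h22 : ω₂ * ω₂ = algebraMap k A (-(b * d)) - algebraMap k A d * ω₁ +
      algebraMap k A c * ω₂)
    (R : Set A)
    (hR : R = {z | ∃ p q : O, ∃ r : k, r ∈ 𝔞 ∧
      z = algebraMap O A p + algebraMap O A q * ω₁ + algebraMap k A r * ω₂})
    (hc1 : ω₁ * ω₁ ∈ R)
    (hc2 : ∀ x : k, x ∈ 𝔞 → algebraMap k A x * (ω₁ * ω₂) ∈ R)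
    (hc3 : ∀ x : k, x ∈ 𝔞 * 𝔞 → algebraMap k A x * (ω₂ * ω₂) ∈ R) :
    a ∈ 𝔞 ∧ b ∈ (1 : FractionalIdeal (nonZeroDivisors O) k) ∧ c ∈ 𝔞⁻¹ ∧ d ∈ 𝔞⁻¹ * 𝔞⁻¹ :=
  coefficients_membership_of_cubic_multiplication_general O k A 𝔞 h𝔞 a b c d ω₁ ω₂ hind h11 h22 R hR
    hc1 hc3
end

section
/- Let k be a field and y an irreducible binary quadratic form over k (with nonzero discriminant). Then the separable cubic algebra k(y*) associated to the binary cubic form y* = v₂·y is isomorphic to k̃(y) × k, where k̃(y) is the quadratic étale algebra determined by y. -/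
/-!
Dehomogenising `y* = v₂·y` at `v₁` gives `t·(y₃t² + y₂t + y₁)`, the product of `t` and the
reverse of `y(t, 1)`. The two factors are coprime because `y₁ ≠ 0`, so the Chinese remainder
theorem splits off `k[t]/(t) ≅ k`. Irreducibility forces `y₃ ≠ 0`, so the root of `y(t, 1)` is
a unit, and `t ↦ t⁻¹` identifies the algebra of the reversed polynomial with `k̃(y)`.
-/

open Polynomial

namespace Polynomial

variable {R : Type*} [CommRing R]

theorem reverse_reverse_of_coeff_zero_ne_zero {f : R[X]} (h : f.coeff 0 ≠ 0) :
    f.reverse.reverse = f := by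
  have hdeg : f.reverse.natDegree = f.natDegree := by
    rw [reverse_natDegree, natTrailingDegree_eq_zero.mpr (.inr h), Nat.sub_zero]
  rw [reverse, hdeg, reverse, reflect_reflect]

theorem reverse_quadratic {a : R} (b c : R) (ha : a ≠ 0) :
    (C a * X ^ 2 + C b * X + C c).reverse = C c * X ^ 2 + C b * X + C a := by
  have hdeg : (C a * X ^ 2 + C b * X).natDegree = 2 := by compute_degree!
  rw [reverse_add_C, hdeg, show C a * X ^ 2 + C b * X = (C a * X + C b) * X by ring,
    reverse_mul_X, reverse_add_C, reverse_mul_X, reverse_C, natDegree_C_mul_X _ ha]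
  ring

theorem isCoprime_X_of_isUnit_coeff_zero {p : R[X]} (h : IsUnit (p.coeff 0)) :
    IsCoprime X p := by
  obtain ⟨g, hg⟩ := X_dvd_sub_C (p := p)
  rw [show p = C (p.coeff 0) * 1 + X * g by rw [← hg]; ring, IsCoprime.add_mul_left_right_iff,
    isCoprime_mul_unit_left_right (h.map C)]
  exact isCoprime_one_right

end Polynomial

namespace AdjoinRoot

variable {R : Type*} [CommRing R]

theorem isUnit_root {f : R[X]} (h : IsUnit (f.coeff 0)) : IsUnit (root f) := by
  obtain ⟨g, hg⟩ := X_dvd_sub_C (p := f)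
  have : root f * mk f g = - of f (f.coeff 0) := by
    rw [← mk_X, ← map_mul, ← hg, map_sub, mk_self, mk_C]; ring
  exact isUnit_of_mul_isUnit_left (this ▸ (h.map (of f)).neg)

noncomputable def reverseAlgEquiv {f : R[X]} (h₀ : IsUnit (f.coeff 0))
    (hlead : IsUnit f.leadingCoeff) : AdjoinRoot f.reverse ≃ₐ[R] AdjoinRoot f :=
  letI := (isUnit_root h₀).invertible
  letI := (isUnit_root (f := f.reverse) (by rwa [coeff_zero_reverse])).invertible
  have hrev : f.reverse.reverse = f := by
    nontriviality R
    exact reverse_reverse_of_coeff_zero_ne_zero h₀.ne_zero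
  let φ := liftAlgHom f.reverse (Algebra.ofId R _) (⅟(root f))
    ((eval₂_reverse_eq_zero_iff _ _ f).mpr (eval₂_root f))
  have hψ_root : eval₂ (algebraMap R _) (⅟(root f.reverse)) f = 0 := by
    have := (eval₂_reverse_eq_zero_iff (algebraMap R _) _ f.reverse).mpr (eval₂_root f.reverse)
    rwa [hrev] at this
  let ψ := liftAlgHom f (Algebra.ofId R _) (⅟(root f.reverse)) hψ_root
  have hφ : φ (root f.reverse) = ⅟(root f) := liftAlgHom_root ..
  have hψ : ψ (root f) = ⅟(root f.reverse) := liftAlgHom_root ..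
  AlgEquiv.ofAlgHom φ ψ
    (algHom_ext <| by
      let := Invertible.map φ (root f.reverse)
      simp only [AlgHom.comp_apply, hψ, map_invOf, AlgHom.id_apply]
      exact invOf_eq_right_inv (by rw [hφ, invOf_mul_self]))
    (algHom_ext <| by
      let := Invertible.map ψ (root f)
      simp only [AlgHom.comp_apply, hφ, map_invOf, AlgHom.id_apply]
      exact invOf_eq_right_inv (by rw [hψ, invOf_mul_self]))

noncomputable def mulAlgEquivProd {f g : R[X]} (h : IsCoprime f g) :
    AdjoinRoot (f * g) ≃ₐ[R] AdjoinRoot f × AdjoinRoot g :=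
  AlgEquiv.ofRingEquiv
    (f := (Ideal.quotEquivOfEq (Ideal.span_singleton_mul_span_singleton f g).symm).trans
      (Ideal.quotientMulEquivQuotientProd _ _ ((Ideal.isCoprime_span_singleton_iff f g).mpr h)))
    fun _ => rfl

noncomputable def algEquivX : AdjoinRoot (X : R[X]) ≃ₐ[R] R :=
  (algEquivOfEq R X (X - C 0) (by simp)).trans (quotientSpanXSubCAlgEquiv (0 : R))

end AdjoinRoot

open AdjoinRoot in
theorem cubic_algebra_of_quadratic_is_quadratic_times_k_general
    {k : Type*} [Field k] (y₁ y₂ y₃ : k)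
    (hy₁ : y₁ ≠ 0)
    (hirr : Irreducible (C y₁ * X ^ 2 + C y₂ * X + C y₃)) :
    Nonempty ((AdjoinRoot (X * (C y₃ * X ^ 2 + C y₂ * X + C y₁))) ≃ₐ[k]
      ((AdjoinRoot (C y₁ * X ^ 2 + C y₂ * X + C y₃)) × k)) := by
  have hy₃ : y₃ ≠ 0 := by
    rintro rfl
    have := degree_eq_one_of_irreducible_of_root hirr (x := 0) (by simp)
    rw [degree_quadratic hy₁] at this
    exact absurd this (by decide)
  have hconst : IsUnit ((C y₁ * X ^ 2 + C y₂ * X + C y₃).coeff 0) := by simpa using hy₃.isUnit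
  have hlead : IsUnit (C y₁ * X ^ 2 + C y₂ * X + C y₃).leadingCoeff := by
    rw [leadingCoeff_quadratic hy₁]; exact hy₁.isUnit
  have hcop : IsCoprime (C y₁ * X ^ 2 + C y₂ * X + C y₃).reverse X :=
    (isCoprime_X_of_isUnit_coeff_zero (by rwa [coeff_zero_reverse])).symm
  rw [mul_comm X, ← reverse_quadratic y₂ y₃ hy₁]
  exact ⟨(mulAlgEquivProd hcop).trans (.prodCongr (reverseAlgEquiv hconst hlead) algEquivX)⟩

/-- Let `y = y₁v₁² + y₂v₁v₂ + y₃v₂²` be an irreducible binary quadratic form over a field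
`k` with nonzero discriminant. The cubic étale algebra `k(y*)` associated to the binary
cubic form `y* = v₂·y` (whose zero locus in `ℙ¹` consists of the two roots of `y`
together with the extra rational point; concretely realized by the degree-3 polynomial
`t·(y₃t² + y₂t + y₁)` obtained from `y*` by swapping the variables) is isomorphic to
`k̃(y) × k`, where `k̃(y) = k[t]/(y(t,1))` is the quadratic étale algebra of `y`. -/
theorem cubic_algebra_of_quadratic_is_quadratic_times_k
    {k : Type*} [Field k] (y₁ y₂ y₃ : k)
    (hy₁ : y₁ ≠ 0) (hdisc : y₂ ^ 2 - 4 * y₁ * y₃ ≠ 0)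
    (hirr : Irreducible (C y₁ * X ^ 2 + C y₂ * X + C y₃)) :
    Nonempty ((AdjoinRoot (X * (C y₃ * X ^ 2 + C y₂ * X + C y₁))) ≃ₐ[k]
      ((AdjoinRoot (C y₁ * X ^ 2 + C y₂ * X + C y₃)) × k)) :=
  cubic_algebra_of_quadratic_is_quadratic_times_k_general y₁ y₂ y₃ hy₁ hirr
end

section
/- Let K be a non-archimedean local field with integer ring O and residue cardinality q, and let F/K be an unramified quadratic extension with O_F = O[θ]. Let T, N denote trace and norm of F/K. Then for Re(a), Re(b) large, ∫_{(K^×)²×K} |t₁|^a |t₂|^b 1_{O}(t₁) 1_{O}(t₁T(u+t₂θ)) 1_{O}(t₁N(u+t₂θ)) d^×t₁ d^×t₂ du = (1−q^{1−2a+b})^{-1}(1−q^{-b})^{-1}(1+q^{-a}). -/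
/-!
Since `‖T(u + t₂θ)‖ ≤ max(‖u‖, ‖t₂‖)` and `‖N(u + t₂θ)‖ = max(‖u‖, ‖t₂‖)²`, the trace condition
follows from the other two, and on the shell `‖t₁‖ = q^{-k}` the integrand is supported on
`‖u‖, ‖t₂‖ ≤ q^{⌊k/2⌋}`. The `u`-integral is the volume `q^{⌊k/2⌋}` of that ball (a ball of radius
`q^m` is the disjoint union of `q` balls of radius `q^{m-1}` centred at scaled residue
representatives), the `t₂`-integral is a geometric series over the shells `‖t₂‖ = q^{⌊k/2⌋-j}`,
each of `ν`-measure one, and the `t₁`-series `∑ₖ q^{-ka} q^{⌊k/2⌋(1+b)}` splits into even and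
odd `k`, which produces the factor `1 + q^{-a}`.
-/

open MeasureTheory Metric
open scoped Classical

section ValueGroup

variable {V : Type*} [NormedAddCommGroup V] {q : ℕ}

lemma norm_le_zpow_sub_one_of_lt (hq : 1 < q)
    (hval : ∀ x : V, x ≠ 0 → ∃ n : ℤ, ‖x‖ = (q : ℝ) ^ n) {x : V} {m : ℤ}
    (hx : ‖x‖ < (q : ℝ) ^ m) : ‖x‖ ≤ (q : ℝ) ^ (m - 1) := by
  have hq1 : (1 : ℝ) < q := by exact_mod_cast hq
  rcases eq_or_ne x 0 with rfl | hx0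
  · rw [norm_zero]; positivity
  obtain ⟨n, hn⟩ := hval x hx0
  rw [hn] at hx ⊢
  exact zpow_le_zpow_right₀ hq1.le (by linarith [(zpow_lt_zpow_iff_right₀ hq1).1 hx])

lemma sq_norm_le_zpow_iff (hq : 1 < q)
    (hval : ∀ x : V, x ≠ 0 → ∃ n : ℤ, ‖x‖ = (q : ℝ) ^ n) (x : V) (k : ℤ) :
    ‖x‖ ^ 2 ≤ (q : ℝ) ^ k ↔ ‖x‖ ≤ (q : ℝ) ^ (k / 2) := by
  have hq1 : (1 : ℝ) < q := by exact_mod_cast hq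
  rcases eq_or_ne x 0 with rfl | hx0
  · rw [norm_zero, zero_pow two_ne_zero]
    exact ⟨fun _ => by positivity, fun _ => by positivity⟩
  obtain ⟨n, hn⟩ := hval x hx0
  rw [hn, ← zpow_natCast, ← zpow_mul, zpow_le_zpow_iff_right₀ hq1,
    zpow_le_zpow_iff_right₀ hq1, Int.le_ediv_iff_mul_le two_pos]
  push_cast
  omega

end ValueGroup

lemma hasSum_pow_mul_pow_div_two {𝕜 : Type*} [NormedField 𝕜] [CompleteSpace 𝕜] {x y : 𝕜}
    (h : ‖x ^ 2 * y‖ < 1) :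
    HasSum (fun k : ℕ => x ^ k * y ^ (k / 2)) ((1 + x) * (1 - x ^ 2 * y)⁻¹) := by
  have hgeom := hasSum_geometric_of_norm_lt_one h
  have heven : (fun i : ℕ => x ^ (2 * i) * y ^ (2 * i / 2)) = fun i => (x ^ 2 * y) ^ i := by
    funext i
    rw [Nat.mul_div_cancel_left i two_pos, pow_mul, mul_pow]
  have hodd : (fun i : ℕ => x ^ (2 * i + 1) * y ^ ((2 * i + 1) / 2))
      = fun i => x * (x ^ 2 * y) ^ i := by
    funext i
    rw [show (2 * i + 1) / 2 = i by omega, pow_succ, pow_mul, mul_pow]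
    ring
  convert HasSum.even_add_odd (f := fun k => x ^ k * y ^ (k / 2)) (heven ▸ hgeom)
    (hodd ▸ hgeom.mul_left x) using 1
  ring

lemma mul_le_one_of_mul_sq_le_one {τ T M : ℝ} (hτ0 : 0 ≤ τ) (hτ1 : τ ≤ 1) (hTM : T ≤ M)
    (h : τ * M ^ 2 ≤ 1) : τ * T ≤ 1 := by
  have hτT : τ * T ≤ τ * M := mul_le_mul_of_nonneg_left hTM hτ0
  rcases le_total M 1 with hM | hM
  · nlinarith
  · nlinarith [mul_le_mul_of_nonneg_left (show M ≤ M ^ 2 by nlinarith) hτ0]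

section AdditiveHaar

lemma measure_closedBall_eq_center_zero {E : Type*} [NormedAddCommGroup E] [MeasurableSpace E]
    [BorelSpace E] (μ : Measure E) [μ.IsAddLeftInvariant] (c : E) (r : ℝ) :
    μ (closedBall c r) = μ (closedBall 0 r) := by
  rw [show closedBall (0 : E) r = (c + ·) ⁻¹' closedBall c r by simp [preimage_add_closedBall],
    measure_preimage_add]

variable {K : Type*} [NormedField K] [IsUltrametricDist K] {q : ℕ} {S : Finset K}

lemma norm_le_one_of_mem_residues (hcover : ∀ x : K, ‖x‖ ≤ 1 → ∃ s ∈ S, ‖x - s‖ < 1)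
    (hsep : ∀ s ∈ S, ∀ t ∈ S, s ≠ t → ‖s - t‖ = 1) {s : K} (hs : s ∈ S) : ‖s‖ ≤ 1 := by
  obtain ⟨s₀, hs₀, h₀⟩ := hcover 0 (by simp)
  rw [zero_sub, norm_neg] at h₀
  rcases eq_or_ne s s₀ with rfl | hne
  · exact h₀.le
  calc ‖s‖ = ‖(s - s₀) + s₀‖ := by rw [sub_add_cancel]
    _ ≤ max ‖s - s₀‖ ‖s₀‖ := IsUltrametricDist.norm_add_le_max _ _
    _ ≤ 1 := max_le (hsep s hs s₀ hs₀ hne).le h₀.le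

lemma closedBall_zpow_eq_biUnion (hq : 1 < q)
    (hval : ∀ x : K, x ≠ 0 → ∃ n : ℤ, ‖x‖ = (q : ℝ) ^ n)
    (hcover : ∀ x : K, ‖x‖ ≤ 1 → ∃ s ∈ S, ‖x - s‖ < 1) (hS : ∀ s ∈ S, ‖s‖ ≤ 1)
    {z : K} {m : ℤ} (hz : ‖z‖ = (q : ℝ) ^ m) :
    closedBall (0 : K) ((q : ℝ) ^ m) = ⋃ s ∈ S, closedBall (z * s) ((q : ℝ) ^ (m - 1)) := by
  have hqm : (0 : ℝ) < (q : ℝ) ^ m := zpow_pos (by positivity) m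
  have hz0 : z ≠ 0 := norm_pos_iff.1 (hz ▸ hqm)
  ext x
  simp only [Set.mem_iUnion, mem_closedBall, dist_eq_norm, exists_prop, sub_zero]
  constructor
  · intro hx
    obtain ⟨s, hs, hxs⟩ := hcover (x / z) (by rwa [norm_div, hz, div_le_one hqm])
    refine ⟨s, hs, norm_le_zpow_sub_one_of_lt hq hval ?_⟩
    calc ‖x - z * s‖ = ‖z‖ * ‖x / z - s‖ := by rw [← norm_mul, mul_sub, mul_div_cancel₀ _ hz0]
      _ < (q : ℝ) ^ m := by rw [hz]; exact mul_lt_of_lt_one_right hqm hxs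
  · rintro ⟨s, hs, hxs⟩
    calc ‖x‖ = ‖(x - z * s) + z * s‖ := by rw [sub_add_cancel]
      _ ≤ max ‖x - z * s‖ ‖z * s‖ := IsUltrametricDist.norm_add_le_max _ _
      _ ≤ (q : ℝ) ^ m := by
        refine max_le (hxs.trans (zpow_le_zpow_right₀ (by exact_mod_cast hq.le) (by omega))) ?_
        rw [norm_mul, hz]
        exact mul_le_of_le_one_right hqm.le (hS s hs)

lemma pairwiseDisjoint_closedBall_residues (hq : 1 < q)
    (hsep : ∀ s ∈ S, ∀ t ∈ S, s ≠ t → ‖s - t‖ = 1) {z : K} {m : ℤ} (hz : ‖z‖ = (q : ℝ) ^ m) :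
    (S : Set K).PairwiseDisjoint fun s => closedBall (z * s) ((q : ℝ) ^ (m - 1)) := by
  intro s hs t ht hst
  refine Set.disjoint_left.2 fun x hxs hxt => ?_
  have hlt : (q : ℝ) ^ (m - 1) < (q : ℝ) ^ m :=
    zpow_lt_zpow_right₀ (by exact_mod_cast hq) (by omega)
  have hdist : dist (z * s) (z * t) = (q : ℝ) ^ m := by
    rw [dist_eq_norm, ← mul_sub, norm_mul, hz, hsep s hs t ht hst, mul_one]
  have := IsUltrametricDist.dist_triangle_max (z * s) x (z * t)
  rw [dist_comm (z * s) x, hdist] at this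
  rw [mem_closedBall] at hxs hxt
  linarith [max_le hxs hxt]

variable [MeasurableSpace K] [BorelSpace K] (μ : Measure K) [μ.IsAddLeftInvariant]

lemma measure_closedBall_zpow_eq_mul (hq : 1 < q)
    (hval : ∀ x : K, x ≠ 0 → ∃ n : ℤ, ‖x‖ = (q : ℝ) ^ n)
    (hsurj : ∀ n : ℤ, ∃ x : K, x ≠ 0 ∧ ‖x‖ = (q : ℝ) ^ n) (hcard : S.card = q)
    (hcover : ∀ x : K, ‖x‖ ≤ 1 → ∃ s ∈ S, ‖x - s‖ < 1)
    (hsep : ∀ s ∈ S, ∀ t ∈ S, s ≠ t → ‖s - t‖ = 1) (m : ℤ) :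
    μ (closedBall 0 ((q : ℝ) ^ m)) = q * μ (closedBall 0 ((q : ℝ) ^ (m - 1))) := by
  obtain ⟨z, -, hz⟩ := hsurj m
  rw [closedBall_zpow_eq_biUnion hq hval hcover
      (fun s => norm_le_one_of_mem_residues hcover hsep) hz,
    measure_biUnion_finset (pairwiseDisjoint_closedBall_residues hq hsep hz)
      fun _ _ => measurableSet_closedBall]
  simp only [measure_closedBall_eq_center_zero μ, Finset.sum_const, hcard, nsmul_eq_mul]

lemma measure_closedBall_zpow (hq : 1 < q)
    (hval : ∀ x : K, x ≠ 0 → ∃ n : ℤ, ‖x‖ = (q : ℝ) ^ n)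
    (hsurj : ∀ n : ℤ, ∃ x : K, x ≠ 0 ∧ ‖x‖ = (q : ℝ) ^ n) (hcard : S.card = q)
    (hcover : ∀ x : K, ‖x‖ ≤ 1 → ∃ s ∈ S, ‖x - s‖ < 1)
    (hsep : ∀ s ∈ S, ∀ t ∈ S, s ≠ t → ‖s - t‖ = 1) (hμO : μ (closedBall 0 1) = 1) (m : ℤ) :
    μ (closedBall 0 ((q : ℝ) ^ m)) = ENNReal.ofReal ((q : ℝ) ^ m) := by
  have hq0 : (0 : ℝ) < q := by positivity
  have hstep := measure_closedBall_zpow_eq_mul μ hq hval hsurj hcard hcover hsep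
  have hofReal (n : ℤ) :
      ENNReal.ofReal ((q : ℝ) ^ n) = q * ENNReal.ofReal ((q : ℝ) ^ (n - 1)) := by
    rw [← ENNReal.ofReal_natCast, ← ENNReal.ofReal_mul hq0.le, ← zpow_one_add₀ hq0.ne',
      add_sub_cancel]
  induction m using Int.induction_on with
  | zero => simpa using hμO
  | succ n ih => rw [hstep, hofReal, add_sub_cancel_right, ih]
  | pred n ih =>
    have hq' : (q : ENNReal) ≠ 0 := by exact_mod_cast (zero_lt_one.trans hq).ne'
    rw [← ENNReal.mul_right_inj hq' (ENNReal.natCast_ne_top q), ← hstep, ← hofReal, ih]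

end AdditiveHaar

lemma integral_eq_tsum_of_const_on_disjoint {α ι E : Type*} [MeasurableSpace α] [Countable ι]
    [NormedAddCommGroup E] [NormedSpace ℝ E] [CompleteSpace E] {ν : Measure α}
    {U : ι → Set α} (hU : ∀ j, MeasurableSet (U j)) (hUν : ∀ j, ν (U j) = 1)
    (hdisj : Pairwise (Function.onFun Disjoint U)) {f : α → E} {c : ι → E}
    (hfc : ∀ j, Set.EqOn f (fun _ => c j) (U j)) (hf0 : ∀ x ∉ ⋃ j, U j, f x = 0)
    (hc : Summable fun j => ‖c j‖) :
    ∫ x, f x ∂ν = ∑' j, c j := by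
  have hf : f = fun x => ∑' j, (U j).indicator (fun _ => c j) x := by
    funext x
    by_cases hx : x ∈ ⋃ j, U j
    · obtain ⟨j, hj⟩ := Set.mem_iUnion.1 hx
      rw [tsum_eq_single j fun i hi =>
          Set.indicator_of_notMem (Set.disjoint_left.1 (hdisj hi.symm) hj) _,
        Set.indicator_of_mem hj, hfc j hj]
    · rw [hf0 x hx]
      have hx' : ∀ j, x ∉ U j := fun j hj => hx (Set.mem_iUnion.2 ⟨j, hj⟩)
      simp [Set.indicator_of_notMem (hx' _)]
  have hint (j : ι) : Integrable ((U j).indicator fun _ => c j) ν :=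
    (integrableOn_const (by simp [hUν])).integrable_indicator (hU j)
  have hnorm (j : ι) : ∫ x, ‖(U j).indicator (fun _ => c j) x‖ ∂ν = ‖c j‖ := by
    simp_rw [norm_indicator_eq_indicator_norm]
    simp [integral_indicator_const _ (hU j), measureReal_def, hUν]
  rw [hf, ← integral_tsum_of_summable_integral_norm hint (by simpa only [hnorm] using hc)]
  congr with j
  simp [integral_indicator_const _ (hU j), measureReal_def, hUν]

lemma measure_norm_eq_zpow {K : Type*} [NormedField K] [MeasurableSpace K] [BorelSpace K]
    {ν : Measure K} {q : ℕ} (hsurj : ∀ n : ℤ, ∃ x : K, x ≠ 0 ∧ ‖x‖ = (q : ℝ) ^ n)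
    (hνinv : ∀ a : K, a ≠ 0 → Measure.map (fun x => a * x) ν = ν)
    (hνO : ν {x : K | ‖x‖ = 1} = 1) (n : ℤ) :
    ν {x : K | ‖x‖ = (q : ℝ) ^ n} = 1 := by
  obtain ⟨z, hz0, hz⟩ := hsurj n
  rw [← hνinv z hz0, Measure.map_apply (measurable_const_mul z)
    (measurableSet_eq_fun measurable_norm measurable_const)]
  convert hνO using 2
  ext x
  simp only [Set.mem_preimage, Set.mem_ofPred_eq, norm_mul, ← hz]
  exact mul_eq_left₀ (norm_ne_zero_iff.2 hz0)

section Shells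

variable {V : Type*} [NormedAddCommGroup V] [MeasurableSpace V] [BorelSpace V] {q : ℕ}
  {ν : Measure V}

lemma integral_eq_tsum_of_const_on_shells {E : Type*} [NormedAddCommGroup E] [NormedSpace ℝ E]
    [CompleteSpace E] (hq : 1 < q)
    (hval : ∀ x : V, x ≠ 0 → ∃ n : ℤ, ‖x‖ = (q : ℝ) ^ n)
    (hshell : ∀ n : ℤ, ν {x | ‖x‖ = (q : ℝ) ^ n} = 1) (m : ℤ) {f : V → E} {c : ℕ → E}
    (h0 : f 0 = 0) (hout : ∀ x, (q : ℝ) ^ m < ‖x‖ → f x = 0)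
    (hfc : ∀ x (j : ℕ), ‖x‖ = (q : ℝ) ^ (m - j) → f x = c j) (hc : Summable fun j => ‖c j‖) :
    ∫ x, f x ∂ν = ∑' j, c j := by
  have hq1 : (1 : ℝ) < q := by exact_mod_cast hq
  have hinj : Function.Injective fun n : ℤ => (q : ℝ) ^ n :=
    zpow_right_injective₀ (by positivity) hq1.ne'
  refine integral_eq_tsum_of_const_on_disjoint (U := fun j : ℕ => {x | ‖x‖ = (q : ℝ) ^ (m - j)})
    (fun j => measurableSet_eq_fun measurable_norm measurable_const) (fun j => hshell _)
    (fun i j hij => Set.disjoint_left.2 fun x hi hj => hij ?_) (fun j x hx => hfc x j hx) ?_ hc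
  · have := hinj (Eq.trans (Eq.symm hi) hj)
    omega
  intro x hx
  rcases eq_or_ne x 0 with rfl | hx0
  · exact h0
  rcases lt_or_ge ((q : ℝ) ^ m) ‖x‖ with hlt | hle
  · exact hout x hlt
  obtain ⟨n, hn⟩ := hval x hx0
  rw [hn, zpow_le_zpow_iff_right₀ hq1] at hle
  exact absurd (Set.mem_iUnion.2 ⟨(m - n).toNat, by
    simp [hn, Int.toNat_of_nonneg (sub_nonneg.2 hle)]⟩) hx

lemma integral_norm_rpow_le_zpow (hq : 1 < q)
    (hval : ∀ x : V, x ≠ 0 → ∃ n : ℤ, ‖x‖ = (q : ℝ) ^ n)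
    (hshell : ∀ n : ℤ, ν {x | ‖x‖ = (q : ℝ) ^ n} = 1) (m : ℤ) {b : ℝ} (hb : 0 < b) :
    ∫ x, (if ‖x‖ ≤ (q : ℝ) ^ m then ‖x‖ ^ b else 0) ∂ν
      = ((q : ℝ) ^ b) ^ m * (1 - ((q : ℝ) ^ b)⁻¹)⁻¹ := by
  have hq1 : (1 : ℝ) < q := by exact_mod_cast hq
  have hqb : 1 < (q : ℝ) ^ b := Real.one_lt_rpow hq1 hb
  have hr0 : 0 ≤ ((q : ℝ) ^ b)⁻¹ := inv_nonneg.2 (by positivity)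
  have hr1 : ((q : ℝ) ^ b)⁻¹ < 1 := inv_lt_one_of_one_lt₀ hqb
  have hgeom := (hasSum_geometric_of_lt_one hr0 hr1).mul_left (((q : ℝ) ^ b) ^ m)
  rw [← hgeom.tsum_eq]
  refine integral_eq_tsum_of_const_on_shells hq hval hshell m ?_ ?_ ?_ ?_
  · simp [Real.zero_rpow hb.ne']
  · intro x hx
    simp [not_le.2 hx]
  · intro x j hx
    rw [hx, if_pos (zpow_le_zpow_right₀ hq1.le (by omega)), ← Real.rpow_intCast_mul (by positivity),
      mul_comm, Real.rpow_mul_intCast (by positivity), zpow_sub₀ (by positivity), zpow_natCast,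
      div_eq_mul_inv, inv_pow]
  · simpa only [Real.norm_eq_abs] using hgeom.summable.abs

end Shells

lemma zeta_support_iff {K F : Type*} [NormedField K] [CommRing F] [Algebra K F] {θ : F}
    (hNorm : ∀ a b : K,
      ‖Algebra.norm K (algebraMap K F a + algebraMap K F b * θ)‖ = max ‖a‖ ‖b‖ ^ 2)
    (hTr : ∀ a b : K,
      ‖Algebra.trace K F (algebraMap K F a + algebraMap K F b * θ)‖ ≤ max ‖a‖ ‖b‖)
    (t₁ t₂ u : K) :
    (‖t₁‖ ≤ 1 ∧
        ‖t₁ * Algebra.trace K F (algebraMap K F u + algebraMap K F t₂ * θ)‖ ≤ 1 ∧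
        ‖t₁ * Algebra.norm K (algebraMap K F u + algebraMap K F t₂ * θ)‖ ≤ 1)
      ↔ ‖t₁‖ ≤ 1 ∧ ‖t₁‖ * max ‖u‖ ‖t₂‖ ^ 2 ≤ 1 := by
  rw [norm_mul, norm_mul, hNorm]
  exact ⟨fun ⟨h₁, _, hN⟩ => ⟨h₁, hN⟩, fun ⟨h₁, hN⟩ =>
    ⟨h₁, mul_le_one_of_mul_sq_le_one (norm_nonneg t₁) h₁ (hTr u t₂) hN, hN⟩⟩

lemma reduced_zeta_support_iff_of_norm_eq {V : Type*} [NormedAddCommGroup V] {q : ℕ}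
    (hq : 1 < q) (hval : ∀ x : V, x ≠ 0 → ∃ n : ℤ, ‖x‖ = (q : ℝ) ^ n)
    {t₁ : V} {k : ℕ} (ht₁ : ‖t₁‖ = (q : ℝ) ^ (-(k : ℤ))) (t₂ u : V) :
    (‖t₁‖ ≤ 1 ∧ ‖t₁‖ * max ‖u‖ ‖t₂‖ ^ 2 ≤ 1)
      ↔ ‖u‖ ≤ (q : ℝ) ^ (k / 2) ∧ ‖t₂‖ ≤ (q : ℝ) ^ (k / 2) := by
  have hq1 : (1 : ℝ) ≤ q := by exact_mod_cast hq.le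
  have hmax : max ‖u‖ ‖t₂‖ ^ 2 = max (‖u‖ ^ 2) (‖t₂‖ ^ 2) := by
    rcases le_total ‖u‖ ‖t₂‖ with h | h
    · rw [max_eq_right h, max_eq_right (pow_le_pow_left₀ (norm_nonneg _) h 2)]
    · rw [max_eq_left h, max_eq_left (pow_le_pow_left₀ (norm_nonneg _) h 2)]
  have h₁ : ‖t₁‖ ≤ 1 := ht₁ ▸ zpow_le_one_of_nonpos₀ hq1 (by omega)
  rw [and_iff_right h₁, ht₁, zpow_neg, inv_mul_le_iff₀ (by positivity), mul_one, hmax,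
    max_le_iff, sq_norm_le_zpow_iff hq hval, sq_norm_le_zpow_iff hq hval,
    show (k : ℤ) / 2 = ((k / 2 : ℕ) : ℤ) by omega, zpow_natCast]

section ReducedZetaIntegral

variable {V : Type*} [NormedAddCommGroup V] [MeasurableSpace V] [BorelSpace V] {q : ℕ}
  {μ ν : Measure V}

lemma integral_integral_reduced_zeta_of_norm_eq (hq : 1 < q)
    (hval : ∀ x : V, x ≠ 0 → ∃ n : ℤ, ‖x‖ = (q : ℝ) ^ n)
    (hμ : ∀ m : ℤ, μ (closedBall 0 ((q : ℝ) ^ m)) = ENNReal.ofReal ((q : ℝ) ^ m))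
    (hν : ∀ n : ℤ, ν {x | ‖x‖ = (q : ℝ) ^ n} = 1) {t₁ : V} {k : ℕ}
    (ht₁ : ‖t₁‖ = (q : ℝ) ^ (-(k : ℤ))) (a : ℝ) {b : ℝ} (hb : 0 < b) :
    ∫ t₂, ∫ u, (if ‖t₁‖ ≤ 1 ∧ ‖t₁‖ * max ‖u‖ ‖t₂‖ ^ 2 ≤ 1
        then ‖t₁‖ ^ a * ‖t₂‖ ^ b else 0) ∂μ ∂ν
      = ((q : ℝ) ^ (-a)) ^ k * ((q : ℝ) * (q : ℝ) ^ b) ^ (k / 2)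
          * (1 - ((q : ℝ) ^ b)⁻¹)⁻¹ := by
  have hμR : μ.real (closedBall 0 ((q : ℝ) ^ (k / 2))) = (q : ℝ) ^ (k / 2) := by
    rw [measureReal_def, ← zpow_natCast, hμ, ENNReal.toReal_ofReal (by positivity)]
  have hinner (t₂ : V) :
      ∫ u, (if ‖t₁‖ ≤ 1 ∧ ‖t₁‖ * max ‖u‖ ‖t₂‖ ^ 2 ≤ 1 then ‖t₁‖ ^ a * ‖t₂‖ ^ b else 0) ∂μ
        = (q : ℝ) ^ (k / 2) * ‖t₁‖ ^ a
          * (if ‖t₂‖ ≤ (q : ℝ) ^ (k / 2) then ‖t₂‖ ^ b else 0) := by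
    calc _ = ∫ u, (closedBall 0 ((q : ℝ) ^ (k / 2))).indicator
          (fun _ => ‖t₁‖ ^ a * (if ‖t₂‖ ≤ (q : ℝ) ^ (k / 2) then ‖t₂‖ ^ b else 0)) u ∂μ := by
          congr with u
          simp only [reduced_zeta_support_iff_of_norm_eq hq hval ht₁, Set.indicator_apply,
            mem_closedBall_zero_iff, ite_and, mul_ite, mul_zero]
      _ = _ := by
          rw [integral_indicator_const _ measurableSet_closedBall, hμR, smul_eq_mul, mul_assoc]
  simp_rw [hinner]
  rw [integral_const_mul, ← zpow_natCast, integral_norm_rpow_le_zpow hq hval hν _ hb]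
  have hq0 : (0 : ℝ) ≤ q := Nat.cast_nonneg q
  rw [zpow_natCast, zpow_natCast, ht₁, ← Real.rpow_intCast_mul hq0,
    show ((-(k : ℤ) : ℤ) : ℝ) * a = -a * (k : ℕ) by push_cast; ring,
    Real.rpow_mul_natCast hq0, mul_pow]
  ring

lemma integral_reduced_zeta (hq : 1 < q) (hval : ∀ x : V, x ≠ 0 → ∃ n : ℤ, ‖x‖ = (q : ℝ) ^ n)
    (hμ : ∀ m : ℤ, μ (closedBall 0 ((q : ℝ) ^ m)) = ENNReal.ofReal ((q : ℝ) ^ m))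
    (hν : ∀ n : ℤ, ν {x | ‖x‖ = (q : ℝ) ^ n} = 1) {a b : ℝ} (hb : 0 < b) (hab : b + 1 < 2 * a) :
    ∫ t₁, ∫ t₂, ∫ u, (if ‖t₁‖ ≤ 1 ∧ ‖t₁‖ * max ‖u‖ ‖t₂‖ ^ 2 ≤ 1
        then ‖t₁‖ ^ a * ‖t₂‖ ^ b else 0) ∂μ ∂ν ∂ν
      = (1 - (q : ℝ) ^ (1 - 2 * a + b))⁻¹ * (1 - (q : ℝ) ^ (-b))⁻¹ * (1 + (q : ℝ) ^ (-a)) := by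
  have hq1 : (1 : ℝ) < q := by exact_mod_cast hq
  have hq0 : (0 : ℝ) < q := by positivity
  have hxy : ((q : ℝ) ^ (-a)) ^ 2 * ((q : ℝ) * (q : ℝ) ^ b) = (q : ℝ) ^ (1 - 2 * a + b) := by
    rw [← Real.rpow_natCast, ← Real.rpow_mul hq0.le, ← Real.rpow_one_add' hq0.le (by linarith),
      ← Real.rpow_add hq0]
    ring_nf
  have hsum := (hasSum_pow_mul_pow_div_two (x := (q : ℝ) ^ (-a)) (y := (q : ℝ) * (q : ℝ) ^ b)
    (by rw [hxy, Real.norm_of_nonneg (by positivity)]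
        exact Real.rpow_lt_one_of_one_lt_of_neg hq1 (by linarith))).mul_left
    (1 - ((q : ℝ) ^ b)⁻¹)⁻¹
  rw [hxy, ← Real.rpow_neg hq0.le] at hsum
  convert (integral_eq_tsum_of_const_on_shells hq hval hν 0 ?_ ?_ ?_ ?_).trans hsum.tsum_eq using 1
  · ring
  · simp [Real.zero_rpow (show a ≠ 0 by linarith)]
  · intro t₁ ht₁
    simp [not_le.2 (zpow_zero (q : ℝ) ▸ ht₁)]
  · intro t₁ k ht₁
    rw [zero_sub] at ht₁
    rw [integral_integral_reduced_zeta_of_norm_eq hq hval hμ hν ht₁ a hb, Real.rpow_neg hq0.le b]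
    ring
  · simpa only [Real.norm_eq_abs] using hsum.summable.abs

end ReducedZetaIntegral

theorem local_zeta_unramified_explicit_general
    (K : Type*) [NormedField K] [MeasurableSpace K] [BorelSpace K]
    (hultra : ∀ x y : K, ‖x + y‖ ≤ max ‖x‖ ‖y‖)
    (q : ℕ) (hq : 1 < q)
    (hval : ∀ x : K, x ≠ 0 → ∃ n : ℤ, ‖x‖ = (q : ℝ) ^ n)
    (hsurj : ∀ n : ℤ, ∃ x : K, x ≠ 0 ∧ ‖x‖ = (q : ℝ) ^ n)
    (μ ν : Measure K)
    (hμinv : ∀ a : K, Measure.map (fun x => a + x) μ = μ)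
    (hμO : μ {x : K | ‖x‖ ≤ 1} = 1)
    (hres : ∃ S : Finset K, S.card = q ∧ (∀ x : K, ‖x‖ ≤ 1 → ∃ s ∈ S, ‖x - s‖ < 1) ∧
      ∀ s ∈ S, ∀ t ∈ S, s ≠ t → ‖s - t‖ = 1)
    (hνinv : ∀ a : K, a ≠ 0 → Measure.map (fun x => a * x) ν = ν)
    (hνO : ν {x : K | ‖x‖ = 1} = 1)
    (F : Type*) [Field F] [Algebra K F]
    (θ : F)
    (hNorm : ∀ a b : K,
      ‖Algebra.norm K (algebraMap K F a + algebraMap K F b * θ)‖ = max ‖a‖ ‖b‖ ^ 2)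
    (hTr : ∀ a b : K,
      ‖Algebra.trace K F (algebraMap K F a + algebraMap K F b * θ)‖ ≤ max ‖a‖ ‖b‖) :
    ∀ a b : ℝ, 0 < b → b + 1 < 2 * a →
      (∫ t₁, ∫ t₂, ∫ u,
          (if ‖t₁‖ ≤ 1 ∧
              ‖t₁ * Algebra.trace K F (algebraMap K F u + algebraMap K F t₂ * θ)‖ ≤ 1 ∧
              ‖t₁ * Algebra.norm K (algebraMap K F u + algebraMap K F t₂ * θ)‖ ≤ 1
            then ‖t₁‖ ^ a * ‖t₂‖ ^ b else 0) ∂μ ∂ν ∂ν)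
        = (1 - (q : ℝ) ^ (1 - 2 * a + b))⁻¹ * (1 - (q : ℝ) ^ (-b))⁻¹ *
            (1 + (q : ℝ) ^ (-a)) := by
  intro a b hb hab
  have := IsUltrametricDist.isUltrametricDist_of_forall_norm_add_le_max_norm hultra
  have : μ.IsAddLeftInvariant := ⟨hμinv⟩
  obtain ⟨S, hcard, hcover, hsep⟩ := hres
  have hμ := measure_closedBall_zpow μ hq hval hsurj hcard hcover hsep
    (by rw [← hμO]; congr 1; ext; simp)
  simp_rw [zeta_support_iff hNorm hTr]
  exact integral_reduced_zeta hq hval hμ (measure_norm_eq_zpow hsurj hνinv hνO) hb hab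

/-- Explicit local zeta formula at a finite place, unramified case.  `K` is a
non-archimedean local field with ring of integers `O = {‖x‖ ≤ 1}`, residue cardinality
`q`, value group `q^ℤ`, `μ` the additive Haar measure with `μ(O) = 1` and `ν` the
multiplicative Haar measure with `ν(O^×) = 1`.  `F/K` is an unramified quadratic
extension with `O_F = O[θ]`, encoded by the norm identity
`‖N(a + bθ)‖ = max(‖a‖,‖b‖)²` and trace bound `‖T(a + bθ)‖ ≤ max(‖a‖,‖b‖)`.
Then for `a, b` in the convergence range,
`∫ |t₁|^a |t₂|^b 1_O(t₁) 1_O(t₁T(u+t₂θ)) 1_O(t₁N(u+t₂θ)) d^×t₁ d^×t₂ du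
  = (1−q^{1−2a+b})⁻¹ (1−q^{-b})⁻¹ (1+q^{-a})`. -/
theorem local_zeta_unramified_explicit
    (K : Type*) [NormedField K] [MeasurableSpace K] [BorelSpace K]
    (hultra : ∀ x y : K, ‖x + y‖ ≤ max ‖x‖ ‖y‖)
    (q : ℕ) (hq : 1 < q)
    (hval : ∀ x : K, x ≠ 0 → ∃ n : ℤ, ‖x‖ = (q : ℝ) ^ n)
    (hsurj : ∀ n : ℤ, ∃ x : K, x ≠ 0 ∧ ‖x‖ = (q : ℝ) ^ n)
    (μ ν : Measure K)
    (hμinv : ∀ a : K, Measure.map (fun x => a + x) μ = μ)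
    (hμO : μ {x : K | ‖x‖ ≤ 1} = 1)
    (hres : ∃ S : Finset K, S.card = q ∧ (∀ x : K, ‖x‖ ≤ 1 → ∃ s ∈ S, ‖x - s‖ < 1) ∧
      ∀ s ∈ S, ∀ t ∈ S, s ≠ t → ‖s - t‖ = 1)
    (hνinv : ∀ a : K, a ≠ 0 → Measure.map (fun x => a * x) ν = ν)
    (hνO : ν {x : K | ‖x‖ = 1} = 1)
    (hν0 : ν {(0 : K)} = 0)
    (F : Type*) [Field F] [Algebra K F] (hrank : Module.finrank K F = 2)
    (θ : F)
    (hNorm : ∀ a b : K,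
      ‖Algebra.norm K (algebraMap K F a + algebraMap K F b * θ)‖ = max ‖a‖ ‖b‖ ^ 2)
    (hTr : ∀ a b : K,
      ‖Algebra.trace K F (algebraMap K F a + algebraMap K F b * θ)‖ ≤ max ‖a‖ ‖b‖) :
    ∀ a b : ℝ, 0 < b → b + 1 < 2 * a →
      (∫ t₁, ∫ t₂, ∫ u,
          (if ‖t₁‖ ≤ 1 ∧
              ‖t₁ * Algebra.trace K F (algebraMap K F u + algebraMap K F t₂ * θ)‖ ≤ 1 ∧
              ‖t₁ * Algebra.norm K (algebraMap K F u + algebraMap K F t₂ * θ)‖ ≤ 1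
            then ‖t₁‖ ^ a * ‖t₂‖ ^ b else 0) ∂μ ∂ν ∂ν)
        = (1 - (q : ℝ) ^ (1 - 2 * a + b))⁻¹ * (1 - (q : ℝ) ^ (-b))⁻¹ *
            (1 + (q : ℝ) ^ (-a)) :=
  local_zeta_unramified_explicit_general K hultra q hq hval hsurj μ ν hμinv hμO hres hνinv hνO F θ
    hNorm hTr
end
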